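/- arXiv:2308.04878 — 5 statements merged into one kernel-verified Lean document; each statement's English description precedes it below -/
import Mathlib

section
/- Let p be an odd prime such that 2 generates (Z/p^2 Z)^×, let r ≥ 1 and n = p^r − 1. If f ∈ Z[X] is a monic polynomial of degree n with all coefficients in {±1}, and f = g·h with g, h ∈ Z[X] monic of positive degree, then min(deg g, deg h) ≤ p^{r−1} − 1 < n/p. -/
/-!
Modulo 2 a Littlewood polynomial of degree `p ^ r - 1` becomes `1 + X + ⋯ + X ^ (p ^ r - 1)`,
which is divisible by the cyclotomic polynomial `Φ_{p ^ r}`. As 2 generates `(ℤ/p²ℤ)ˣ`, it also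
generates `(ℤ/p^rℤ)ˣ`, so `Φ_{p ^ r}` stays irreducible over `𝔽₂`. It therefore divides the
reduction of `g` or of `h`, and that factor has degree at least `φ(p ^ r) = p ^ r - p ^ (r - 1)`.
-/

open Polynomial
open scoped Nat

namespace ZMod

theorem intCast_pow_eq_one_iff (a : ℤ) (n k : ℕ) :
    (a : ZMod n) ^ k = 1 ↔ (n : ℤ) ∣ a ^ k - 1 := by
  rw [← intCast_zmod_eq_zero_iff_dvd]
  push_cast
  rw [sub_eq_zero]

variable {p : ℕ} {a : ℤ}

theorem orderOf_intCast_prime_of_orderOf_intCast_prime_sq (hp : p.Prime)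
    (ha : orderOf (a : ZMod (p ^ 2)) = φ (p ^ 2)) : orderOf (a : ZMod p) = p - 1 := by
  have := Fact.mk hp
  rw [Nat.totient_prime_pow_succ hp, pow_one] at ha
  have hunit : IsUnit (a : ZMod p) := by
    have h0 : 0 < orderOf (a : ZMod (p ^ 2)) :=
      ha ▸ Nat.mul_pos hp.pos (Nat.sub_pos_of_lt hp.one_lt)
    simpa using (orderOf_pos_iff.mp h0).isUnit.map (castHom (dvd_pow_self p two_ne_zero) (ZMod p))
  refine Nat.dvd_antisymm (orderOf_dvd_card_sub_one hunit.ne_zero) ?_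
  -- `a ^ t ≡ 1 [ZMOD p]` gives `a ^ (t * p) ≡ 1 [ZMOD p ^ 2]`, so `p * (p - 1) ∣ t * p`.
  have hsq : (a : ZMod (p ^ 2)) ^ (orderOf (a : ZMod p) * p) = 1 := by
    rw [intCast_pow_eq_one_iff, pow_mul, Nat.cast_pow]
    simpa using dvd_sub_pow_of_dvd_sub ((intCast_pow_eq_one_iff a p _).mp (pow_orderOf_eq_one _)) 1
  have := orderOf_dvd_of_pow_eq_one hsq
  rw [ha, mul_comm p] at this
  exact Nat.dvd_of_mul_dvd_mul_right hp.pos this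

theorem orderOf_intCast_prime_pow_of_orderOf_intCast_prime_sq (hp : p.Prime) (hp2 : p ≠ 2)
    (ha : orderOf (a : ZMod (p ^ 2)) = φ (p ^ 2)) (k : ℕ) :
    orderOf (a : ZMod (p ^ (k + 1))) = φ (p ^ (k + 1)) := by
  have hmodp := orderOf_intCast_prime_of_orderOf_intCast_prime_sq hp ha
  -- Write `a ^ (p - 1) = 1 + p * c`; then `p ∤ c`, and `1 + p * c` has order `p ^ k`.
  obtain ⟨c, hc⟩ := (intCast_pow_eq_one_iff a p _).mp (hmodp ▸ pow_orderOf_eq_one _)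
  have hc_ndvd : ¬ (p : ℤ) ∣ c := by
    rintro ⟨d, rfl⟩
    have hsq : (a : ZMod (p ^ 2)) ^ (p - 1) = 1 := by
      rw [intCast_pow_eq_one_iff, hc]
      exact ⟨d, by push_cast; ring⟩
    have := Nat.le_of_dvd (Nat.sub_pos_of_lt hp.one_lt) (ha ▸ orderOf_dvd_of_pow_eq_one hsq)
    rw [Nat.totient_prime_pow_succ hp, pow_one] at this
    linarith [Nat.mul_le_mul_right (p - 1) hp.two_le, Nat.sub_pos_of_lt hp.one_lt]
  have hpow : (a : ZMod (p ^ (k + 1))) ^ (p - 1) = 1 + p * c := by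
    exact_mod_cast congrArg (Int.cast : ℤ → ZMod (p ^ (k + 1))) (eq_add_of_sub_eq' hc)
  have hord : orderOf ((a : ZMod (p ^ (k + 1))) ^ (p - 1)) = p ^ k :=
    hpow ▸ orderOf_one_add_mul_prime hp hp2 c hc_ndvd k
  rw [Nat.totient_prime_pow_succ hp]
  refine Nat.dvd_antisymm (orderOf_dvd_of_pow_eq_one ?_) ?_
  · rw [mul_comm, pow_mul, ← hord, pow_orderOf_eq_one]
  · have hcop : (p ^ k).Coprime (p - 1) :=
      ((Nat.coprime_self_sub_right hp.pos).mpr (Nat.coprime_one_right p)).pow_left k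
    have hreduce := orderOf_map_dvd
      (castHom (dvd_pow_self p k.succ_ne_zero) (ZMod p)).toMonoidHom (a : ZMod (p ^ (k + 1)))
    simp only [RingHom.toMonoidHom_eq_coe, MonoidHom.coe_coe, map_intCast, hmodp] at hreduce
    exact hcop.mul_dvd_of_dvd_of_dvd (hord ▸ orderOf_pow_dvd _) hreduce

end ZMod

theorem irreducible_cyclotomic_zmod_of_orderOf_eq_totient {ℓ n : ℕ} [Fact ℓ.Prime]
    (hℓn : ¬ ℓ ∣ n) (h : orderOf (ℓ : ZMod n) = φ n) : Irreducible (cyclotomic n (ZMod ℓ)) :=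
  ZMod.irreducible_of_dvd_cyclotomic_of_natDegree hℓn dvd_rfl
    (by rw [natDegree_cyclotomic, ← h, ← orderOf_units, ZMod.coe_unitOfCoprime])

theorem map_zmod_two_eq_geom_sum_of_coeff_eq_one_or_neg_one {f : ℤ[X]} {n : ℕ}
    (hdeg : f.natDegree = n) (hcoeff : ∀ i ≤ n, f.coeff i = 1 ∨ f.coeff i = -1) :
    f.map (Int.castRingHom (ZMod 2)) = ∑ i ∈ Finset.range (n + 1), X ^ i := by
  ext k
  simp only [coeff_map, finsetSum_coeff, coeff_X_pow, Finset.sum_ite_eq, Finset.mem_range]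
  by_cases hk : k ≤ n
  · rcases hcoeff k hk with h1 | h1 <;> simp [h1, Nat.lt_succ_of_le hk]
  · rw [coeff_eq_zero_of_natDegree_lt (by omega), if_neg (by omega), map_zero]

theorem Polynomial.Monic.min_natDegree_add_le_of_prime_dvd_map_mul {R S : Type*} [CommRing R]
    [CommRing S] [IsDomain S] {ρ : R →+* S} {g h : R[X]} (hg : g.Monic) (hh : h.Monic)
    {q : S[X]} (hq : Prime q) (hdvd : q ∣ (g * h).map ρ) :
    min g.natDegree h.natDegree + q.natDegree ≤ g.natDegree + h.natDegree := by
  rw [Polynomial.map_mul] at hdvd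
  rcases hq.dvd_or_dvd hdvd with hd | hd
  · have := natDegree_le_of_dvd hd (hg.map ρ).ne_zero
    rw [hg.natDegree_map] at this
    omega
  · have := natDegree_le_of_dvd hd (hh.map ρ).ne_zero
    rw [hh.natDegree_map] at this
    omega

theorem natCast_pow_sub_one_lt_div {p : ℕ} (hp : 1 < p) (k : ℕ) :
    ((p ^ k - 1 : ℕ) : ℝ) < ((p ^ (k + 1) - 1 : ℕ) : ℝ) / p := by
  have hp' : (1 : ℝ) < p := by exact_mod_cast hp
  rw [lt_div_iff₀ (by positivity), Nat.cast_sub (Nat.one_le_pow _ _ (by omega)),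
    Nat.cast_sub (Nat.one_le_pow _ _ (by omega))]
  push_cast
  rw [pow_succ]
  nlinarith

theorem stmt3_general (p r n : ℕ) (hp : p.Prime) (hodd : Odd p)
    (h2 : orderOf (2 : ZMod (p ^ 2)) = Nat.totient (p ^ 2))
    (hr : 1 ≤ r) (hn : n = p ^ r - 1)
    (f g h : ℤ[X]) (hdeg : f.natDegree = n)
    (hcoeff : ∀ i ≤ n, f.coeff i = 1 ∨ f.coeff i = -1)
    (hgm : g.Monic) (hhm : h.Monic)
    (hfactor : f = g * h) :
    min g.natDegree h.natDegree ≤ p ^ (r - 1) - 1 ∧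
      ((p ^ (r - 1) - 1 : ℕ) : ℝ) < (n : ℝ) / p := by
  obtain ⟨k, rfl⟩ : ∃ k, r = k + 1 := ⟨r - 1, by omega⟩
  subst hn
  rw [Nat.add_sub_cancel]
  have hp2 : p ≠ 2 := hodd.ne_two_of_dvd_nat dvd_rfl
  have hirr : Irreducible (cyclotomic (p ^ (k + 1)) (ZMod 2)) := by
    refine irreducible_cyclotomic_zmod_of_orderOf_eq_totient
      (Nat.two_dvd_ne_zero.mpr (Nat.odd_iff.mp hodd.pow)) ?_
    exact_mod_cast ZMod.orderOf_intCast_prime_pow_of_orderOf_intCast_prime_sq hp hp2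
      (a := 2) (by exact_mod_cast h2) k
  have hdvd : cyclotomic (p ^ (k + 1)) (ZMod 2) ∣ (g * h).map (Int.castRingHom (ZMod 2)) := by
    rw [← hfactor, map_zmod_two_eq_geom_sum_of_coeff_eq_one_or_neg_one hdeg hcoeff,
      Nat.sub_add_cancel (Nat.one_le_pow _ _ hp.pos)]
    exact cyclotomic_dvd_geom_sum_of_dvd _ dvd_rfl (Nat.one_lt_pow k.succ_ne_zero hp.one_lt).ne'
  have hmin := hgm.min_natDegree_add_le_of_prime_dvd_map_mul hhm hirr.prime hdvd
  rw [natDegree_cyclotomic, Nat.totient_prime_pow_succ hp,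
    ← natDegree_mul hgm.ne_zero hhm.ne_zero, ← hfactor, hdeg, Nat.mul_sub_one, ← pow_succ] at hmin
  refine ⟨?_, natCast_pow_sub_one_lt_div hp.one_lt k⟩
  have hpow_le : p ^ k ≤ p ^ (k + 1) := Nat.pow_le_pow_right hp.pos k.le_succ
  omega

/-- If `p` is an odd prime with 2 generating `(ZMod (p^2))ˣ`, `n = p^r - 1`, and a monic
Littlewood polynomial `f` of degree `n` factors as `g * h` with `g, h` monic of positive
degree, then `min (deg g) (deg h) ≤ p^(r-1) - 1 < n / p`. -/
theorem stmt3 (p r n : ℕ) (hp : p.Prime) (hodd : Odd p)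
    (h2 : orderOf (2 : ZMod (p ^ 2)) = Nat.totient (p ^ 2))
    (hr : 1 ≤ r) (hn : n = p ^ r - 1)
    (f g h : ℤ[X]) (hf : f.Monic) (hdeg : f.natDegree = n)
    (hcoeff : ∀ i ≤ n, f.coeff i = 1 ∨ f.coeff i = -1)
    (hgm : g.Monic) (hhm : h.Monic) (hg : 0 < g.natDegree) (hh : 0 < h.natDegree)
    (hfactor : f = g * h) :
    min g.natDegree h.natDegree ≤ p ^ (r - 1) - 1 ∧
      ((p ^ (r - 1) - 1 : ℕ) : ℝ) < (n : ℝ) / p :=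
  stmt3_general p r n hp hodd h2 hr hn f g h hdeg hcoeff hgm hhm hfactor
end

section
/- Let n+1 be a power of 2. The map sending a monic Littlewood polynomial f of degree n to g mod 4, where g(X) = f(X+1), is a bijection from the set of 2^n monic Littlewood polynomials of degree n onto the set of monic degree-n polynomials in (Z/4Z)[X] whose reduction in (Z/2Z)[X] equals X^n. -/
/-!
Since `f ↦ f(X + 1)` is inverted by `g ↦ g(X - 1)` (Taylor expansion at `-1`), `f(X + 1) ≡ q`
mod 4 exactly when `f ≡ q(X - 1)` mod 4. Modulo 2, `q(X - 1) = (X + 1)^n`, and because `n + 1 = 2^m`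
this is `(X^(n+1) + 1) / (X + 1) = 1 + X + ⋯ + X^n`. So every coefficient of `q(X - 1)` of degree
at most `n` is `1` or `3` mod 4, and each of these residues has exactly one lift in `{1, -1}`.
-/

open Polynomial Finset

theorem CharTwo.X_add_one_pow_eq_geom_sum {R : Type*} [CommRing R] [CharP R 2] {n m : ℕ}
    (hm : n + 1 = 2 ^ m) : (X + 1 : R[X]) ^ n = ∑ i ∈ range (n + 1), X ^ i := by
  have hreg : IsLeftRegular (X + 1 : R[X]) := by
    simpa using (monic_X_add_C (1 : R)).isRegular.left
  refine hreg ?_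
  calc (X + 1) * (X + 1) ^ n = (X + 1) ^ 2 ^ m := by rw [← hm, pow_succ']
    _ = (X ^ (n + 1) - 1 : R[X]) := by rw [add_pow_char_pow, one_pow, hm, CharTwo.sub_eq_add]
    _ = (X + 1) * ∑ i ∈ range (n + 1), X ^ i := by rw [← mul_geom_sum, CharTwo.sub_eq_add]

def signLift (x : ZMod 4) : ℤ := if x = 1 then 1 else -1

lemma signLift_eq_one_or_neg_one (x : ZMod 4) : signLift x = 1 ∨ signLift x = -1 := by
  unfold signLift; split_ifs <;> simp

lemma intCast_signLift {x : ZMod 4}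
    (hx : ZMod.castHom (show 2 ∣ 4 by norm_num) (ZMod 2) x = 1) : (signLift x : ZMod 4) = x := by
  revert x; decide

lemma signLift_intCast {s : ℤ} (hs : s = 1 ∨ s = -1) : signLift (s : ZMod 4) = s := by
  rcases hs with rfl | rfl <;> decide

def IsMonicLittlewood (n : ℕ) (f : ℤ[X]) : Prop :=
  f.Monic ∧ f.natDegree = n ∧ ∀ i ≤ n, f.coeff i = 1 ∨ f.coeff i = -1

lemma IsMonicLittlewood.eq_of_map_eq {n : ℕ} {f g : ℤ[X]} (hf : IsMonicLittlewood n f)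
    (hg : IsMonicLittlewood n g)
    (h : f.map (Int.castRingHom (ZMod 4)) = g.map (Int.castRingHom (ZMod 4))) : f = g := by
  ext i
  by_cases hi : i ≤ n
  · have hcoeff_i := congrArg (coeff · i) h
    simp only [coeff_map, eq_intCast] at hcoeff_i
    rw [← signLift_intCast (hf.2.2 i hi), ← signLift_intCast (hg.2.2 i hi), hcoeff_i]
  · rw [coeff_eq_zero_of_natDegree_lt (by rw [hf.2.1]; omega),
      coeff_eq_zero_of_natDegree_lt (by rw [hg.2.1]; omega)]

lemma existsUnique_isMonicLittlewood_map_eq {n : ℕ} {p : (ZMod 4)[X]} (hp : p.Monic)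
    (hdeg : p.natDegree = n)
    (hodd : ∀ i ≤ n, ZMod.castHom (show 2 ∣ 4 by norm_num) (ZMod 2) (p.coeff i) = 1) :
    ∃! f : ℤ[X], IsMonicLittlewood n f ∧ f.map (Int.castRingHom (ZMod 4)) = p := by
  set f : ℤ[X] := ∑ i ∈ range (n + 1), C (signLift (p.coeff i)) * X ^ i
  have hcoeff (i : ℕ) : f.coeff i = if i ≤ n then signLift (p.coeff i) else 0 := by
    simp only [f, finsetSum_coeff, coeff_C_mul_X_pow, Finset.sum_ite_eq, mem_range,
      Nat.lt_succ_iff]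
  have hlead : f.coeff n = 1 := by
    rw [hcoeff, if_pos le_rfl, ← hdeg, hp.coeff_natDegree]; rfl
  have hf : IsMonicLittlewood n f := by
    have hfdeg : f.natDegree = n := by
      refine natDegree_eq_of_le_of_coeff_ne_zero ?_ (by simp [hlead])
      exact natDegree_le_iff_coeff_eq_zero.mpr fun i hi => by
        rw [hcoeff, if_neg (by exact_mod_cast hi.not_ge)]
    refine ⟨?_, hfdeg, fun i hi => ?_⟩
    · rw [Monic, leadingCoeff, hfdeg, hlead]
    · rw [hcoeff, if_pos hi]; exact signLift_eq_one_or_neg_one _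
  have hmap : f.map (Int.castRingHom (ZMod 4)) = p := by
    ext i
    rw [coeff_map, hcoeff]
    split_ifs with hi
    · rw [eq_intCast, intCast_signLift (hodd i hi)]
    · rw [map_zero, coeff_eq_zero_of_natDegree_lt (by omega)]
  exact ⟨f, ⟨hf, hmap⟩, fun g hg => hg.1.eq_of_map_eq hf (hg.2.trans hmap.symm)⟩

lemma map_comp_X_add_one_eq_iff {R S : Type*} [CommRing R] [CommRing S] (φ : R →+* S)
    (f : R[X]) (q : S[X]) : (f.comp (X + 1)).map φ = q ↔ f.map φ = taylor (-1) q := by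
  rw [← C_1, ← taylor_apply, map_taylor, map_one]
  constructor
  · rintro rfl
    rw [taylor_taylor, neg_add_cancel, taylor_zero]
  · rintro h
    rw [h, taylor_taylor, add_neg_cancel, taylor_zero]

lemma map_coeff_taylor_neg_one_of_map_eq_X_pow {R S : Type*} [CommRing R] [CommRing S] [CharP S 2]
    (ψ : R →+* S) {n m : ℕ} (hm : n + 1 = 2 ^ m) {q : R[X]} (hq : q.map ψ = X ^ n) {i : ℕ}
    (hi : i ≤ n) : ψ ((taylor (-1) q).coeff i) = 1 := by
  rw [← coeff_map, map_taylor, hq, map_neg, map_one, CharTwo.neg_eq, taylor_X_pow, C_1,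
    CharTwo.X_add_one_pow_eq_geom_sum hm, finsetSum_coeff]
  simp [coeff_X_pow, Nat.lt_succ_iff.mpr hi]

/-- For `n + 1` a power of 2, the map `f ↦ (f(X+1) mod 4)` is a bijection from monic
Littlewood polynomials of degree `n` onto monic degree-`n` polynomials over `ZMod 4`
reducing to `X^n` over `ZMod 2`: every such target polynomial has a unique preimage. -/
theorem stmt8 (n m : ℕ) (hm : n + 1 = 2 ^ m) :
    ∀ q : (ZMod 4)[X], q.Monic → q.natDegree = n →
      q.map (ZMod.castHom (by norm_num : (2:ℕ) ∣ 4) (ZMod 2)) = X ^ n →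
      ∃! f : ℤ[X],
        (f.Monic ∧ f.natDegree = n ∧ ∀ i ≤ n, f.coeff i = 1 ∨ f.coeff i = -1) ∧
          (f.comp (X + 1)).map (Int.castRingHom (ZMod 4)) = q := by
  intro q hq hdeg hq2
  simp only [map_comp_X_add_one_eq_iff]
  have hmonic : (taylor (-1) q).Monic := by rw [Monic, leadingCoeff_taylor]; exact hq
  have hdeg' : (taylor (-1) q).natDegree = n := by rw [natDegree_taylor, hdeg]
  exact existsUnique_isMonicLittlewood_map_eq hmonic hdeg' fun i hi =>
    map_coeff_taylor_neg_one_of_map_eq_X_pow _ hm hq2 hi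
end

section
/- Let g ∈ Z[X] be monic of degree n with g(X) = X^n + Σ_{i=0}^{n−1} g_i X^i where all g_i are even. Suppose i is the least index with g_i ≡ 2 (mod 4) (assuming such an index exists). Then g has an irreducible factor over Q of degree at least n − i. -/
/-!
Write `g = X ^ n + 2 h`, so that `h_i` is odd. If `g = f k` with `f, k` monic of degrees `a, b`,
then `f ≡ X ^ a` and `k ≡ X ^ b` modulo 2 (as `X` is prime in `𝔽₂[X]`),
say `f = X ^ a + 2 f'` and `k = X ^ b + 2 k'`.
Comparing with `h = X ^ b f' + X ^ a k' + 2 f' k'` shows that `f'_{i-b}` or `k'_{i-a}` is odd,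
so one factor satisfies the same hypothesis with the same value of `degree - index`
(`a - (i - b) = n - i`). Induction on the degree, ending at a factor irreducible over `ℤ` and
hence over `ℚ` by Gauss's lemma, gives the claim.
-/

open Polynomial

namespace Polynomial

variable {R : Type*} [CommRing R]

theorem Monic.exists_eq_X_pow_add_C_mul {p : R} {g : R[X]} (hg : g.Monic)
    (hdvd : ∀ j < g.natDegree, p ∣ g.coeff j) :
    ∃ h : R[X], g = X ^ g.natDegree + C p * h := by
  obtain ⟨h, hh⟩ : C p ∣ g - X ^ g.natDegree := by
    rw [C_dvd_iff_dvd_coeff]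
    intro j
    rw [coeff_sub, coeff_X_pow]
    rcases lt_trichotomy j g.natDegree with hj | rfl | hj
    · simpa [hj.ne] using hdvd j hj
    · simp [hg.coeff_natDegree]
    · simp [hj.ne', coeff_eq_zero_of_natDegree_lt hj]
  exact ⟨h, eq_add_of_sub_eq' hh⟩

theorem Monic.eq_X_pow_of_dvd_X_pow [IsDomain R] {f : R[X]} (hf : f.Monic) {n : ℕ}
    (hdvd : f ∣ X ^ n) : f = X ^ f.natDegree := by
  obtain ⟨m, -, hm⟩ := (dvd_prime_pow prime_X n).1 hdvd
  rw [eq_of_monic_of_associated hf (monic_X_pow m) hm, natDegree_X_pow]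

theorem Monic.exists_eq_X_pow_add_C_mul_of_mul_eq {p : R} (hp : Prime p) {f k h : R[X]}
    (hf : f.Monic) {n : ℕ} (hfk : f * k = X ^ n + C p * h) :
    ∃ f' : R[X], f = X ^ f.natDegree + C p * f' := by
  let I := Ideal.span {p}
  have : I.IsPrime := (Ideal.span_singleton_prime hp.ne_zero).2 hp
  have hpI : Ideal.Quotient.mk I p = 0 :=
    Ideal.Quotient.eq_zero_iff_mem.2 (Ideal.mem_span_singleton_self p)
  have hdvd : f.map (Ideal.Quotient.mk I) ∣ X ^ n :=
    ⟨k.map _, by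
      rw [← Polynomial.map_mul, hfk, Polynomial.map_add, Polynomial.map_mul, map_C, hpI, C_0,
        zero_mul, add_zero, Polynomial.map_pow, map_X]⟩
  have hfX := (hf.map _).eq_X_pow_of_dvd_X_pow hdvd
  refine hf.exists_eq_X_pow_add_C_mul fun j hj => ?_
  rw [← Ideal.mem_span_singleton, ← Ideal.Quotient.eq_zero_iff_mem, ← coeff_map, hfX,
    coeff_X_pow, if_neg (by rw [hf.natDegree_map]; exact hj.ne)]

variable [IsDomain R]

theorem not_dvd_coeff_of_mul_eq {p : R} (hp : p ≠ 0) {f k f' k' h : R[X]} {a b i : ℕ}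
    (hf : f = X ^ a + C p * f') (hk : k = X ^ b + C p * k')
    (hfk : f * k = X ^ (a + b) + C p * h) (hi : ¬ p ∣ h.coeff i) :
    (b ≤ i ∧ ¬ p ∣ f'.coeff (i - b)) ∨ (a ≤ i ∧ ¬ p ∣ k'.coeff (i - a)) := by
  have hh : h = X ^ b * f' + X ^ a * k' + C p * (f' * k') := by
    refine mul_left_cancel₀ (C_ne_zero.2 hp) (add_left_cancel (a := X ^ (a + b)) ?_)
    rw [← hfk, hf, hk]
    ring
  contrapose! hi
  rw [hh, coeff_add, coeff_add, coeff_X_pow_mul', coeff_X_pow_mul', coeff_C_mul]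
  refine dvd_add (dvd_add ?_ ?_) (dvd_mul_right _ _)
  · split_ifs with hb
    exacts [hi.1 hb, dvd_zero p]
  · split_ifs with ha
    exacts [hi.2 ha, dvd_zero p]

theorem Monic.exists_irreducible_dvd_map_natDegree_sub_le {K : Type*} [Field K] [Algebra R K]
    [IsFractionRing R K] [IsIntegrallyClosed R] {p : R} (hp : Prime p) {g h : R[X]}
    (hg : g.Monic) (hgh : g = X ^ g.natDegree + C p * h) {i : ℕ} (hi : ¬ p ∣ h.coeff i) :
    ∃ q : K[X], Irreducible q ∧ q ∣ g.map (algebraMap R K) ∧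
      g.natDegree - i ≤ q.natDegree := by
  obtain ⟨n, hn⟩ : ∃ n, g.natDegree = n := ⟨_, rfl⟩
  induction n using Nat.strong_induction_on generalizing g h i with
  | _ n ih =>
  by_cases hirr : Irreducible g
  · exact ⟨_, hg.irreducible_iff_irreducible_map_fraction_map.1 hirr, dvd_rfl,
      by rw [hg.natDegree_map]; omega⟩
  have hg1 : g ≠ 1 := by
    rintro rfl
    rw [natDegree_one, pow_zero, left_eq_add, mul_eq_zero, C_eq_zero] at hgh
    exact hi (by simp [hgh.resolve_left hp.ne_zero])
  obtain ⟨f, k, hf, hk, hfk, hf0, hk0⟩ : ∃ f k : R[X], f.Monic ∧ k.Monic ∧ f * k = g ∧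
      f.natDegree ≠ 0 ∧ k.natDegree ≠ 0 := by
    simpa [hg.irreducible_iff_natDegree, hg1] using hirr
  have hdeg : g.natDegree = f.natDegree + k.natDegree := hfk ▸ hf.natDegree_mul hk
  have hfkX : f * k = X ^ (f.natDegree + k.natDegree) + C p * h := hfk.trans (hdeg ▸ hgh)
  have descend : ∀ {a b a' : R[X]}, a.Monic → a * b = g → a.natDegree + b.natDegree = n →
      b.natDegree ≠ 0 → a = X ^ a.natDegree + C p * a' → b.natDegree ≤ i →
      ¬ p ∣ a'.coeff (i - b.natDegree) →
      ∃ q : K[X], Irreducible q ∧ q ∣ g.map (algebraMap R K) ∧ n - i ≤ q.natDegree := by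
    intro a b a' ha hab hdeg' hb0 ha' hbi hai
    obtain ⟨q, hq, hqa, hqdeg⟩ := ih a.natDegree (by omega) ha ha' hai rfl
    exact ⟨q, hq, hqa.trans (map_dvd _ (Dvd.intro b hab)), by omega⟩
  obtain ⟨f', hf'⟩ := hf.exists_eq_X_pow_add_C_mul_of_mul_eq hp hfkX
  obtain ⟨k', hk'⟩ := hk.exists_eq_X_pow_add_C_mul_of_mul_eq hp ((mul_comm k f).trans hfkX)
  rcases not_dvd_coeff_of_mul_eq hp.ne_zero hf' hk' hfkX hi with
    ⟨hki, hf'i⟩ | ⟨hfi, hk'i⟩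
  · exact hn ▸ descend hf hfk (by omega) hk0 hf' hki hf'i
  · exact hn ▸ descend hk (mul_comm k f ▸ hfk) (by omega) hf0 hk' hfi hk'i

end Polynomial

theorem stmt9_general (n : ℕ) (g : ℤ[X]) (hg : g.Monic) (hdeg : g.natDegree = n)
    (heven : ∀ j < n, (2 : ℤ) ∣ g.coeff j)
    (i : ℕ) (hgi : g.coeff i % 4 = 2) :
    ∃ q : ℚ[X], Irreducible q ∧ q ∣ g.map (Int.castRingHom ℚ) ∧
      n - i ≤ q.natDegree := by
  obtain ⟨h, hgh⟩ := hg.exists_eq_X_pow_add_C_mul (hdeg ▸ heven)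
  have hhi : ¬ 2 ∣ h.coeff i := by
    have hcoeff := congrArg (coeff · i) hgh
    simp only [coeff_add, coeff_X_pow, coeff_C_mul] at hcoeff
    split_ifs at hcoeff <;> omega
  subst hdeg
  simpa [algebraMap_int_eq] using
    hg.exists_irreducible_dvd_map_natDegree_sub_le (K := ℚ) Int.prime_two hgh hhi

/-- If `g ∈ ℤ[X]` is monic of degree `n` with all non-leading coefficients even, and `i`
is the least index with `g_i ≡ 2 (mod 4)`, then `g` has an irreducible factor over `ℚ`
of degree at least `n - i`. -/
theorem stmt9 (n : ℕ) (g : ℤ[X]) (hg : g.Monic) (hdeg : g.natDegree = n)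
    (heven : ∀ j < n, (2 : ℤ) ∣ g.coeff j)
    (i : ℕ) (hi : i < n) (hgi : g.coeff i % 4 = 2)
    (hleast : ∀ j < i, g.coeff j % 4 ≠ 2) :
    ∃ q : ℚ[X], Irreducible q ∧ q ∣ g.map (Int.castRingHom ℚ) ∧
      n - i ≤ q.natDegree :=
  stmt9_general n g hg hdeg heven i hgi
end

section
/- For every n ≥ 1 there exists a polynomial of degree n with all coefficients in {−1, +1} that is irreducible over Q. -/
open Polynomial Finset

/-!
The witness is `X ^ n - X ^ (n - 1) - ⋯ - 1`, whose product with `X - 1` is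
`X ^ (n + 1) - 2 X ^ n + 1`. It has a root `β > 0`, and every other complex root `z` satisfies
`∑ z ^ i β ^ (n - 1 - i) = β ^ n z ^ n`; comparing norms gives `‖z‖ ≤ 1`, while `‖z‖ = 1` would
force `‖z - 2‖ = 1`, i.e. `z = 1`. So a monic integer factor not vanishing at `β` has all its roots
in the open unit disc, hence constant term `0`, contradicting the constant term `-1`. In a
nontrivial factorisation both factors therefore vanish at `β`, making it a double root; but a
double root `b` of `X ^ (n + 1) - 2 X ^ n + 1` has `(n + 1) b = 2 n`, which leads to
`(n + 1) ^ (n + 1) = 2 ^ (n + 1) n ^ n`, impossible since `n` and `n + 1` are coprime.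
Gauss's lemma carries irreducibility from `ℤ` to `ℚ`.
-/

theorem degree_geom_sum_X_lt {R : Type*} [Semiring R] (n : ℕ) :
    (∑ i ∈ range n, (X : R[X]) ^ i).degree < n := by
  refine (degree_sum_le _ _).trans_lt ((Finset.sup_lt_iff (WithBot.bot_lt_coe n)).2 fun i hi => ?_)
  exact (degree_X_pow_le i).trans_lt (WithBot.coe_lt_coe.2 (mem_range.1 hi))

theorem geom_sum₂_eq_pow_mul_pow_of_ne {R : Type*} [CommRing R] [IsDomain R] {n : ℕ} {z w : R}
    (hz : z ^ (n + 1) - 2 * z ^ n + 1 = 0) (hw : w ^ (n + 1) - 2 * w ^ n + 1 = 0) (hne : z ≠ w) :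
    ∑ i ∈ range n, z ^ i * w ^ (n - 1 - i) = w ^ n * z ^ n := by
  refine mul_right_cancel₀ (sub_ne_zero.2 hne) ?_
  linear_combination geom_sum₂_mul z w n - w ^ n * hz + z ^ n * hw

theorem Complex.eq_one_of_norm_eq_one_of_norm_sub_two_eq_one {z : ℂ} (h1 : ‖z‖ = 1)
    (h2 : ‖z - 2‖ = 1) : z = 1 := by
  have hz := Complex.sq_norm_sub_sq_re z
  have hz2 := Complex.sq_norm_sub_sq_re (z - 2)
  simp only [h1, h2, Complex.sub_re, Complex.sub_im, Complex.re_ofNat, Complex.im_ofNat,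
    sub_zero] at hz hz2
  have hre : z.re = 1 := by nlinarith
  apply Complex.ext <;> simp <;> nlinarith

theorem succ_pow_succ_ne_two_pow_succ_mul_pow {n : ℕ} (hn : 2 ≤ n) :
    (n + 1) ^ (n + 1) ≠ 2 ^ (n + 1) * n ^ n := by
  intro h
  have hdvd : n ^ n ∣ (n + 1) ^ (n + 1) := h ▸ dvd_mul_left _ _
  have hcop : (n ^ n).Coprime ((n + 1) ^ (n + 1)) :=
    (Nat.coprime_self_add_right.2 (Nat.coprime_one_right n)).pow n (n + 1)
  have := hcop.eq_one_of_dvd hdvd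
  rw [Nat.pow_eq_one] at this
  omega

theorem Polynomial.Monic.coeff_zero_eq_zero_of_forall_norm_lt_one {q : ℤ[X]} (hq : q.Monic)
    (hdeg : 0 < q.natDegree) (h : ∀ z : ℂ, aeval z q = 0 → ‖z‖ < 1) : q.coeff 0 = 0 := by
  set Q := q.map (algebraMap ℤ ℂ)
  have hQ : Q.Monic := hq.map _
  by_contra h0
  have hroot : ∀ z ∈ Q.roots, 0 < ‖z‖ ∧ ‖z‖ < 1 := by
    intro z hz
    rw [mem_roots hQ.ne_zero, IsRoot, eval_map_algebraMap] at hz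
    refine ⟨norm_pos_iff.2 ?_, h z hz⟩
    rintro rfl
    exact h0 (by simpa using (coeff_zero_eq_aeval_zero' q).trans hz)
  have hcard : Q.roots ≠ 0 := by
    rw [← Multiset.card_pos, ← (IsAlgClosed.splits Q).natDegree_eq_card_roots,
      hq.natDegree_map]
    exact hdeg
  have hlt : ‖Q.coeff 0‖ < 1 := by
    rw [(IsAlgClosed.splits Q).coeff_zero_eq_prod_roots_of_monic hQ, norm_mul, norm_pow,
      norm_neg, norm_one, one_pow, one_mul, ← normHom_apply, map_multiset_prod]
    calc (Q.roots.map normHom).prod < (Q.roots.map fun _ => (1 : ℝ)).prod :=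
          Multiset.prod_map_lt_prod_map hcard _ _ (fun z hz => (hroot z hz).1)
            (fun z hz => (hroot z hz).2)
      _ = 1 := by simp
  have : |(q.coeff 0 : ℝ)| < 1 := by simpa [Q] using hlt
  exact h0 (Int.abs_lt_one_iff.1 (by exact_mod_cast this))

noncomputable def nbonacciPoly (n : ℕ) : ℤ[X] := X ^ n - ∑ i ∈ range n, X ^ i

theorem monic_nbonacciPoly (n : ℕ) : (nbonacciPoly n).Monic :=
  monic_X_pow_sub (degree_geom_sum_X_lt n)

theorem natDegree_nbonacciPoly (n : ℕ) : (nbonacciPoly n).natDegree = n := by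
  refine natDegree_eq_of_degree_eq_some ?_
  rw [nbonacciPoly, degree_sub_eq_left_of_degree_lt] <;> simp [degree_geom_sum_X_lt]

theorem coeff_nbonacciPoly_of_lt {n i : ℕ} (h : i < n) : (nbonacciPoly n).coeff i = -1 := by
  simp [nbonacciPoly, coeff_X_pow, h, h.ne]

theorem coeff_nbonacciPoly_self (n : ℕ) : (nbonacciPoly n).coeff n = 1 := by
  simp [nbonacciPoly, coeff_X_pow]

theorem aeval_nbonacciPoly {A : Type*} [CommRing A] (n : ℕ) (z : A) :
    aeval z (nbonacciPoly n) = z ^ n - ∑ i ∈ range n, z ^ i := by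
  simp [nbonacciPoly]

theorem nbonacciPoly_mul_X_sub_one (n : ℕ) :
    nbonacciPoly n * (X - 1) = X ^ (n + 1) - 2 * X ^ n + 1 := by
  rw [nbonacciPoly, sub_mul, geom_sum_mul]
  ring

theorem pow_succ_sub_two_mul_pow_add_one_eq_zero {A : Type*} [CommRing A] {n : ℕ} {z : A}
    (hz : aeval z (nbonacciPoly n) = 0) : z ^ (n + 1) - 2 * z ^ n + 1 = 0 := by
  simpa [hz, map_ofNat, eq_comm] using congrArg (aeval z) (nbonacciPoly_mul_X_sub_one n)

theorem exists_pos_aeval_nbonacciPoly_eq_zero {n : ℕ} (hn : n ≠ 0) :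
    ∃ β : ℝ, 0 < β ∧ aeval β (nbonacciPoly n) = 0 := by
  have h0 : aeval (0 : ℝ) (nbonacciPoly n) = -1 := by
    simp [← coeff_zero_eq_aeval_zero', coeff_nbonacciPoly_of_lt (Nat.pos_of_ne_zero hn)]
  have h2 : aeval (2 : ℝ) (nbonacciPoly n) = 1 := by
    have := congrArg (aeval (2 : ℝ)) (nbonacciPoly_mul_X_sub_one n)
    simp only [map_mul, map_sub, map_add, map_pow, map_one, map_ofNat, aeval_X] at this
    linear_combination this
  obtain ⟨β, hβ, hβroot⟩ := intermediate_value_Ioo zero_le_two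
    (nbonacciPoly n).continuous_aeval.continuousOn (show (0 : ℝ) ∈ Set.Ioo _ _ by simp [h0, h2])
  exact ⟨β, hβ.1, hβroot⟩

theorem norm_le_one_of_aeval_nbonacciPoly_eq_zero {n : ℕ} {β : ℝ} (hβ : 0 < β)
    (hβroot : aeval β (nbonacciPoly n) = 0) {z : ℂ} (hz : aeval z (nbonacciPoly n) = 0)
    (hne : z ≠ β) : ‖z‖ ≤ 1 := by
  by_contra! hr
  have hn : n ≠ 0 := by rintro rfl; simp [nbonacciPoly] at hz
  have hβroot' : aeval (β : ℂ) (nbonacciPoly n) = 0 := by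
    rw [← Complex.coe_algebraMap, aeval_algebraMap_apply, hβroot, map_zero]
  have hβsum : ∑ i ∈ range n, β ^ (n - 1 - i) = β ^ n := by
    rw [sum_range_reflect (β ^ ·) n, eq_comm, ← sub_eq_zero, ← aeval_nbonacciPoly, hβroot]
  have key := geom_sum₂_eq_pow_mul_pow_of_ne (pow_succ_sub_two_mul_pow_add_one_eq_zero hz)
    (pow_succ_sub_two_mul_pow_add_one_eq_zero hβroot') hne
  refine lt_irrefl (β ^ n * ‖z‖ ^ n) ?_
  calc β ^ n * ‖z‖ ^ n = ‖∑ i ∈ range n, z ^ i * (β : ℂ) ^ (n - 1 - i)‖ := by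
        rw [key]; simp [abs_of_pos hβ]
    _ ≤ ∑ i ∈ range n, ‖z‖ ^ i * β ^ (n - 1 - i) := by
        refine (norm_sum_le _ _).trans_eq (sum_congr rfl fun i _ => ?_)
        simp [abs_of_pos hβ]
    _ < ∑ i ∈ range n, ‖z‖ ^ n * β ^ (n - 1 - i) :=
        sum_lt_sum_of_nonempty (nonempty_range_iff.2 hn) fun i hi =>
          mul_lt_mul_of_pos_right (pow_lt_pow_right₀ hr (mem_range.1 hi)) (pow_pos hβ _)
    _ = β ^ n * ‖z‖ ^ n := by rw [← mul_sum, hβsum, mul_comm]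

theorem norm_lt_one_of_aeval_nbonacciPoly_eq_zero {n : ℕ} (hn : 2 ≤ n) {β : ℝ} (hβ : 0 < β)
    (hβroot : aeval β (nbonacciPoly n) = 0) {z : ℂ} (hz : aeval z (nbonacciPoly n) = 0)
    (hne : z ≠ β) : ‖z‖ < 1 := by
  refine (norm_le_one_of_aeval_nbonacciPoly_eq_zero hβ hβroot hz hne).lt_of_ne fun h1 => ?_
  have h2 : ‖z - 2‖ = 1 := by
    have : z ^ n * (z - 2) = -1 := by
      linear_combination pow_succ_sub_two_mul_pow_add_one_eq_zero hz
    simpa [h1] using congrArg norm this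
  obtain rfl := Complex.eq_one_of_norm_eq_one_of_norm_sub_two_eq_one h1 h2
  have h1n : (1 : ℂ) = n := by simpa [aeval_nbonacciPoly, sub_eq_zero] using hz
  have : 1 = n := by exact_mod_cast h1n
  omega

theorem aeval_derivative_nbonacciPoly_ne_zero {K : Type*} [Field K] [CharZero K] {n : ℕ}
    (hn : 2 ≤ n) {b : K} (hb : aeval b (nbonacciPoly n) = 0) :
    aeval b (derivative (nbonacciPoly n)) ≠ 0 := by
  intro hb'
  have h1 := pow_succ_sub_two_mul_pow_add_one_eq_zero hb
  have h2 : ((n : K) + 1) * b ^ n - 2 * n * b ^ (n - 1) = 0 := by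
    have := congrArg (fun p => aeval b (derivative p)) (nbonacciPoly_mul_X_sub_one n)
    simpa [derivative_mul, derivative_X_pow, map_ofNat, hb, hb', mul_assoc, eq_comm] using this
  have hb0 : b ≠ 0 := by rintro rfl; simp [show n ≠ 0 by omega] at h1
  have hlin : ((n : K) + 1) * b = 2 * n := by
    have hpow : b ^ (n - 1) * b = b ^ n := pow_sub_one_mul (by omega) b
    have : b ^ n * (((n : K) + 1) * b - 2 * n) = 0 := by
      linear_combination b * h2 + 2 * n * hpow
    exact sub_eq_zero.1 ((mul_eq_zero.1 this).resolve_left (pow_ne_zero n hb0))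
  have h3 : ((n : K) + 1) ^ (n + 1) * b ^ (n + 1) = ((2 : K) * n) ^ (n + 1) := by
    rw [← mul_pow, hlin]
  have h4 : ((n : K) + 1) ^ n * b ^ n = ((2 : K) * n) ^ n := by rw [← mul_pow, hlin]
  have : ((n : K) + 1) ^ (n + 1) = 2 ^ (n + 1) * n ^ n := by
    linear_combination ((n : K) + 1) ^ (n + 1) * h1 - h3 + 2 * ((n : K) + 1) * h4
  exact succ_pow_succ_ne_two_pow_succ_mul_pow hn (by exact_mod_cast this)

theorem aeval_eq_zero_of_monic_dvd_nbonacciPoly {n : ℕ} (hn : 2 ≤ n) {β : ℝ} (hβ : 0 < β)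
    (hβroot : aeval β (nbonacciPoly n) = 0) {q : ℤ[X]} (hq : q.Monic) (hdeg : 0 < q.natDegree)
    (hdvd : q ∣ nbonacciPoly n) : aeval (β : ℂ) q = 0 := by
  obtain ⟨s, hs⟩ := hdvd
  by_contra hqβ
  have h0 : q.coeff 0 = 0 := hq.coeff_zero_eq_zero_of_forall_norm_lt_one hdeg fun z hz =>
    norm_lt_one_of_aeval_nbonacciPoly_eq_zero hn hβ hβroot (by simp [hs, hz])
      (by rintro rfl; exact hqβ hz)
  have := coeff_nbonacciPoly_of_lt (show 0 < n by omega)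
  rw [hs, mul_coeff_zero, h0, zero_mul] at this
  omega

theorem irreducible_nbonacciPoly {n : ℕ} (hn : 1 ≤ n) : Irreducible (nbonacciPoly n) := by
  refine (monic_nbonacciPoly n).irreducible_iff_natDegree.2 ⟨fun h => ?_, fun p q hp hq hpq => ?_⟩
  · have := natDegree_nbonacciPoly n
    rw [h, natDegree_one] at this
    omega
  by_contra! hdeg
  have hn2 : 2 ≤ n := by
    rw [← natDegree_nbonacciPoly n, ← hpq, hp.natDegree_mul hq]
    omega
  obtain ⟨β, hβ, hβroot⟩ := exists_pos_aeval_nbonacciPoly_eq_zero (n := n) (by omega)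
  have hpβ := aeval_eq_zero_of_monic_dvd_nbonacciPoly hn2 hβ hβroot hp (by omega)
    (Dvd.intro q hpq)
  have hqβ := aeval_eq_zero_of_monic_dvd_nbonacciPoly hn2 hβ hβroot hq (by omega)
    (Dvd.intro_left p hpq)
  refine aeval_derivative_nbonacciPoly_ne_zero hn2 (b := (β : ℂ)) ?_ ?_
  · simp [← hpq, hpβ]
  · simp [← hpq, derivative_mul, hpβ, hqβ]

/-- For every `n ≥ 1` there is a Littlewood polynomial of degree `n` (all coefficients
in `{-1, 1}`) that is irreducible over `ℚ`. -/
theorem stmt11 (n : ℕ) (hn : 1 ≤ n) :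
    ∃ f : ℤ[X], f.natDegree = n ∧ (∀ i ≤ n, f.coeff i = 1 ∨ f.coeff i = -1) ∧
      Irreducible (f.map (Int.castRingHom ℚ)) := by
  refine ⟨nbonacciPoly n, natDegree_nbonacciPoly n, fun i hi => ?_, ?_⟩
  · rcases hi.lt_or_eq with h | rfl
    · exact Or.inr (coeff_nbonacciPoly_of_lt h)
    · exact Or.inl (coeff_nbonacciPoly_self i)
  · rw [← algebraMap_int_eq]
    exact (monic_nbonacciPoly n).irreducible_iff_irreducible_map_fraction_map.1
      (irreducible_nbonacciPoly hn)
end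

section
/- Let n+1 = 2^m and let 0 < θ < 1/2. Let f be a monic Littlewood polynomial of degree n, set g(X) = f(X+1) with coefficients g_0, …, g_{n−1} (all even). If there exists i < θn with g_i ≡ 2 (mod 4), and f has no irreducible factor over Q of degree less than θn, then f is irreducible over Q. -/
/-!
Over `𝔽₂` a Littlewood polynomial of degree `n = 2^m - 1` is
`1 + X + ⋯ + X^n = (X^(n+1) - 1)/(X - 1)`, so `g = f(X+1)` reduces to
`((X+1)^(n+1) - 1)/X = X^n`. If `f = P Q` with monic nonconstant `P, Q ∈ ℤ[X]` (Gauss), then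
the reductions of `P(X+1)` and `Q(X+1)` are monic divisors of `X^n`, hence pure powers of `X`: all
their coefficients below the top are even. Both degrees are at least `θn`, because each factor
contains an irreducible factor of `f`, so every coefficient `g_i` with `i < θn` is a sum of
products of two even numbers and is divisible by `4`.
-/

open Polynomial

namespace Polynomial

theorem eq_X_pow_natDegree_of_monic_dvd_X_pow {R : Type*} [CommRing R] [IsDomain R]
    {p : R[X]} (hp : p.Monic) {n : ℕ} (h : p ∣ X ^ n) : p = X ^ p.natDegree := by
  obtain ⟨i, -, hassoc⟩ := (dvd_prime_pow prime_X n).mp h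
  have hpX : p = X ^ i := eq_of_monic_of_associated hp (monic_X_pow i) hassoc
  rw [hpX, natDegree_X_pow]

theorem dvd_coeff_mul_of_dvd_coeff {R : Type*} [CommSemiring R] {p q : R[X]} {a b : R}
    {k l i : ℕ} (hp : ∀ j < k, a ∣ p.coeff j) (hq : ∀ j < l, b ∣ q.coeff j)
    (hk : i < k) (hl : i < l) : a * b ∣ (p * q).coeff i := by
  rw [coeff_mul]
  refine Finset.dvd_sum fun x hx => ?_
  have hx' : x.1 + x.2 = i := Finset.HasAntidiagonal.mem_antidiagonal.mp hx
  exact mul_dvd_mul (hp _ (by omega)) (hq _ (by omega))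

theorem geom_sum_X_comp_X_add_one_eq_X_pow {R : Type*} [CommRing R] [CharP R 2] (m : ℕ) :
    (∑ k ∈ Finset.range (2 ^ m), (X : R[X]) ^ k).comp (X + 1) = X ^ (2 ^ m - 1) := by
  have hgeom := congrArg (fun p => p.comp (X + 1 : R[X])) (geom_sum_mul (X : R[X]) (2 ^ m))
  simp only [mul_comp, sub_comp, pow_comp, X_comp, one_comp, add_sub_cancel_right] at hgeom
  rw [add_pow_char_pow, one_pow, add_sub_cancel_right] at hgeom
  refine isRegular_X.right (?_ : _ * X = _ * X)
  rw [hgeom, ← pow_succ, Nat.sub_add_cancel Nat.one_le_two_pow]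

theorem map_zmod_two_eq_geom_sum {f : ℤ[X]} (hf : ∀ i ≤ f.natDegree, Odd (f.coeff i)) :
    f.map (Int.castRingHom (ZMod 2)) = ∑ k ∈ Finset.range (f.natDegree + 1), X ^ k := by
  ext i
  simp only [coeff_map, finsetSum_coeff, coeff_X_pow, Finset.sum_ite_eq, Finset.mem_range,
    eq_intCast]
  split_ifs with hi
  · exact (hf i (by omega)).intCast_zmod_two
  · rw [coeff_eq_zero_of_natDegree_lt (by omega), Int.cast_zero]

theorem map_comp_X_add_one_eq_X_pow {f : ℤ[X]} {m : ℕ} (hm : f.natDegree + 1 = 2 ^ m)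
    (hf : ∀ i ≤ f.natDegree, Odd (f.coeff i)) :
    (f.comp (X + 1)).map (Int.castRingHom (ZMod 2)) = X ^ f.natDegree := by
  rw [map_comp, map_zmod_two_eq_geom_sum hf, hm, Polynomial.map_add, map_X, Polynomial.map_one,
    geom_sum_X_comp_X_add_one_eq_X_pow, ← hm, Nat.add_sub_cancel]

theorem two_dvd_coeff_of_map_eq_X_pow {p : ℤ[X]}
    (hp : p.map (Int.castRingHom (ZMod 2)) = X ^ p.natDegree) {j : ℕ} (hj : j < p.natDegree) :
    2 ∣ p.coeff j := by
  have hcoeff := congrArg (coeff · j) hp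
  simp only [coeff_map, coeff_X_pow, if_neg hj.ne, eq_intCast] at hcoeff
  exact (ZMod.intCast_zmod_eq_zero_iff_dvd _ 2).mp hcoeff

theorem four_dvd_coeff_of_map_eq_X_pow {P Q : ℤ[X]} (hP : P.Monic) (hQ : Q.Monic) {n : ℕ}
    (hPQ : (P * Q).map (Int.castRingHom (ZMod 2)) = X ^ n) {i : ℕ}
    (hiP : i < P.natDegree) (hiQ : i < Q.natDegree) : 4 ∣ (P * Q).coeff i := by
  have hdvd : ∀ R : ℤ[X], R.Monic → R.map (Int.castRingHom (ZMod 2)) ∣ X ^ n →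
      ∀ j < R.natDegree, 2 ∣ R.coeff j := fun R hR hRdvd j hj => by
    refine two_dvd_coeff_of_map_eq_X_pow ?_ hj
    rw [eq_X_pow_natDegree_of_monic_dvd_X_pow (hR.map _) hRdvd, hR.natDegree_map]
  rw [Polynomial.map_mul] at hPQ
  exact dvd_coeff_mul_of_dvd_coeff (hdvd P hP (hPQ ▸ dvd_mul_right _ _))
    (hdvd Q hQ (hPQ ▸ dvd_mul_left _ _)) hiP hiQ

theorem Monic.exists_monic_factors_of_not_irreducible_map_cast {f : ℤ[X]} (hf : f.Monic)
    (hf1 : f ≠ 1) (h : ¬Irreducible (f.map (Int.castRingHom ℚ))) :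
    ∃ P Q : ℤ[X], P.Monic ∧ Q.Monic ∧ P * Q = f ∧
      0 < P.natDegree ∧ 0 < Q.natDegree := by
  rw [← IsPrimitive.Int.irreducible_iff_irreducible_map_cast hf.isPrimitive,
    hf.irreducible_iff_natDegree] at h
  simpa only [hf1, ne_eq, not_false_eq_true, true_and, not_forall, not_or, exists_prop,
    pos_iff_ne_zero] using h

theorem lt_natDegree_of_dvd_of_forall_irreducible_dvd {K : Type*} [Field K] {p r : K[X]}
    {c : ℝ} (hc : ∀ q : K[X], Irreducible q → q ∣ p → ¬((q.natDegree : ℝ) < c))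
    (hp : p ≠ 0) (hr : r ∣ p) (hr0 : 0 < r.natDegree) {i : ℕ} (hi : (i : ℝ) < c) :
    i < r.natDegree := by
  have hr0' : r ≠ 0 := ne_zero_of_dvd_ne_zero hp hr
  obtain ⟨q, hq, hqr⟩ := WfDvdMonoid.exists_irreducible_factor
    (fun hu => hr0.ne' (natDegree_eq_zero_of_isUnit hu)) hr0'
  have hcq : c ≤ q.natDegree := not_lt.mp (hc q hq (hqr.trans hr))
  have hqr' : (q.natDegree : ℝ) ≤ r.natDegree := by
    exact_mod_cast natDegree_le_of_dvd hqr hr0'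
  exact_mod_cast hi.trans_le (hcq.trans hqr')

end Polynomial

theorem stmt16_general (n m : ℕ) (hm : n + 1 = 2 ^ m) (θ : ℝ)
    (f : ℤ[X]) (hf : f.Monic) (hdeg : f.natDegree = n)
    (hcoeff : ∀ i ≤ n, f.coeff i = 1 ∨ f.coeff i = -1)
    (g : ℤ[X]) (hg : g = f.comp (X + 1))
    (hi : ∃ i : ℕ, (i : ℝ) < θ * n ∧ g.coeff i % 4 = 2)
    (hnofactor : ∀ q : ℚ[X], Irreducible q → q ∣ f.map (Int.castRingHom ℚ) →
      ¬ ((q.natDegree : ℝ) < θ * n)) :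
    Irreducible (f.map (Int.castRingHom ℚ)) := by
  obtain ⟨i, hiθ, hi4⟩ := hi
  subst hdeg hg
  by_contra hred
  have hf1 : f ≠ 1 := by
    rintro rfl
    exact (Nat.cast_nonneg i).not_gt (by simpa using hiθ)
  obtain ⟨P, Q, hP, hQ, rfl, hP0, hQ0⟩ :=
    hf.exists_monic_factors_of_not_irreducible_map_cast hf1 hred
  have hlt : ∀ R : ℤ[X], R.Monic → R ∣ P * Q → 0 < R.natDegree → i < R.natDegree := by
    intro R hR hRf hR0
    rw [← hR.natDegree_map (Int.castRingHom ℚ)] at hR0 ⊢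
    exact lt_natDegree_of_dvd_of_forall_irreducible_dvd hnofactor (hf.map _).ne_zero
      (Polynomial.map_dvd _ hRf) hR0 hiθ
  have hshift : ∀ R : ℤ[X], R.Monic →
      (R.comp (X + 1)).Monic ∧ (R.comp (X + 1)).natDegree = R.natDegree := fun R hR => by
    rw [← C_1]
    exact ⟨hR.comp_X_add_C 1, by rw [natDegree_comp, natDegree_X_add_C, mul_one]⟩
  have hodd : ∀ j ≤ (P * Q).natDegree, Odd ((P * Q).coeff j) := fun j hj => by
    rcases hcoeff j hj with h | h <;> simp [h]
  have hg2 := map_comp_X_add_one_eq_X_pow hm hodd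
  rw [mul_comp] at hg2 hi4
  have hg4 := four_dvd_coeff_of_map_eq_X_pow (hshift P hP).1 (hshift Q hQ).1 hg2
    ((hshift P hP).2 ▸ hlt P hP (dvd_mul_right P Q) hP0)
    ((hshift Q hQ).2 ▸ hlt Q hQ (dvd_mul_left Q P) hQ0)
  omega

/-- Let `n + 1 = 2^m` and `0 < θ < 1/2`. Let `f` be a monic Littlewood polynomial of
degree `n` and `g(X) = f(X+1)`. If some index `i < θn` has `g_i ≡ 2 (mod 4)`, and `f`
has no irreducible factor over `ℚ` of degree less than `θn`, then `f` is irreducible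
over `ℚ`. -/
theorem stmt16 (n m : ℕ) (hm : n + 1 = 2 ^ m) (θ : ℝ) (hθ0 : 0 < θ) (hθ : θ < 1/2)
    (f : ℤ[X]) (hf : f.Monic) (hdeg : f.natDegree = n)
    (hcoeff : ∀ i ≤ n, f.coeff i = 1 ∨ f.coeff i = -1)
    (g : ℤ[X]) (hg : g = f.comp (X + 1))
    (hi : ∃ i : ℕ, (i : ℝ) < θ * n ∧ g.coeff i % 4 = 2)
    (hnofactor : ∀ q : ℚ[X], Irreducible q → q ∣ f.map (Int.castRingHom ℚ) →
      ¬ ((q.natDegree : ℝ) < θ * n)) :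
    Irreducible (f.map (Int.castRingHom ℚ)) :=
  stmt16_general n m hm θ f hf hdeg hcoeff g hg hi hnofactor
end
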